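/- If (S,T,U) is a TPP triple of a finite group G, then |S|(|T|+|U|-1) ≤ |G|, |T|(|S|+|U|-1) ≤ |G| and |U|(|S|+|T|-1) ≤ |G|. -/
import Mathlib


/-- The right quotient `Q(X) = {x y⁻¹ : x, y ∈ X}` of a subset of a group. -/
def rightQuotient {G : Type*} [Group G] (X : Set G) : Set G :=
  {g | ∃ x ∈ X, ∃ y ∈ X, g = x * y⁻¹}

/-- Subsets `S, T, U` of a group satisfy the Triple Product Property if for all
`s ∈ Q(S)`, `t ∈ Q(T)`, `u ∈ Q(U)`, `s * t * u = 1` iff `s = t = u = 1`. -/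
def TPP {G : Type*} [Group G] (S T U : Set G) : Prop :=
  ∀ s ∈ rightQuotient S, ∀ t ∈ rightQuotient T, ∀ u ∈ rightQuotient U,
    (s * t * u = 1 ↔ s = 1 ∧ t = 1 ∧ u = 1)

lemma mem_rq {G : Type*} [Group G] {X : Set G} {x y : G} (hx : x ∈ X) (hy : y ∈ X) :
    x * y⁻¹ ∈ rightQuotient X := ⟨x, hx, y, hy, rfl⟩

lemma one_mem_rq {G : Type*} [Group G] {X : Set G} (hX : X.Nonempty) :
    (1 : G) ∈ rightQuotient X := by
  obtain ⟨x, hx⟩ := hX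
  exact ⟨x, hx, x, hx, (mul_inv_cancel x).symm⟩

lemma TPP.cyclic {G : Type*} [Group G] {S T U : Set G} (h : TPP S T U) : TPP T U S := by
  intro t ht u hu s hs
  have key := h s hs t ht u hu
  constructor
  · intro h1
    have hstu : s * t * u = 1 := by
      calc s * t * u = s * (t * u * s) * s⁻¹ := by group
      _ = s * 1 * s⁻¹ := by rw [h1]
      _ = 1 := by group
    exact ⟨(key.mp hstu).2.1, (key.mp hstu).2.2, (key.mp hstu).1⟩
  · rintro ⟨h1, h2, h3⟩
    rw [h1, h2, h3]; group

lemma key_lemma {G : Type*} [Group G] [Fintype G] (S T U : Set G)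
    (hT : T.Nonempty) (hU : U.Nonempty) (h : TPP S T U) :
    S.ncard * (T.ncard + U.ncard - 1) ≤ Nat.card G := by
  classical
  obtain ⟨t₀, ht₀⟩ := hT
  obtain ⟨u₀, hu₀⟩ := hU
  set V : Set G := U \ {u₀} with hV
  let f : ↥S × (↥T ⊕ ↥V) → G := fun p =>
    match p with
    | (s, Sum.inl t) => (s : G)⁻¹ * t * t₀⁻¹
    | (s, Sum.inr u) => (s : G)⁻¹ * u * u₀⁻¹
  have hST : ∀ s₁ ∈ S, ∀ s₂ ∈ S, ∀ t₁ ∈ T, ∀ t₂ ∈ T,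
      s₁⁻¹ * t₁ = s₂⁻¹ * t₂ → s₁ = s₂ ∧ t₁ = t₂ := by
    intro s₁ hs₁ s₂ hs₂ t₁ ht₁ t₂ ht₂ heq
    have key := h (s₂ * s₁⁻¹) (mem_rq hs₂ hs₁) (t₁ * t₂⁻¹) (mem_rq ht₁ ht₂)
      1 (one_mem_rq ⟨u₀, hu₀⟩)
    have hprod : s₂ * s₁⁻¹ * (t₁ * t₂⁻¹) * 1 = 1 := by
      calc s₂ * s₁⁻¹ * (t₁ * t₂⁻¹) * 1 = s₂ * (s₁⁻¹ * t₁) * t₂⁻¹ := by group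
      _ = s₂ * (s₂⁻¹ * t₂) * t₂⁻¹ := by rw [heq]
      _ = 1 := by group
    obtain ⟨h1, h2, -⟩ := key.mp hprod
    exact ⟨(mul_inv_eq_one.mp h1).symm, mul_inv_eq_one.mp h2⟩
  have hSU : ∀ s₁ ∈ S, ∀ s₂ ∈ S, ∀ u₁ ∈ U, ∀ u₂ ∈ U,
      s₁⁻¹ * u₁ = s₂⁻¹ * u₂ → s₁ = s₂ ∧ u₁ = u₂ := by
    intro s₁ hs₁ s₂ hs₂ u₁ hu₁ u₂ hu₂ heq
    have key := h (s₂ * s₁⁻¹) (mem_rq hs₂ hs₁) 1 (one_mem_rq ⟨t₀, ht₀⟩)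
      (u₁ * u₂⁻¹) (mem_rq hu₁ hu₂)
    have hprod : s₂ * s₁⁻¹ * 1 * (u₁ * u₂⁻¹) = 1 := by
      calc s₂ * s₁⁻¹ * 1 * (u₁ * u₂⁻¹) = s₂ * (s₁⁻¹ * u₁) * u₂⁻¹ := by group
      _ = s₂ * (s₂⁻¹ * u₂) * u₂⁻¹ := by rw [heq]
      _ = 1 := by group
    obtain ⟨h1, -, h2⟩ := key.mp hprod
    exact ⟨(mul_inv_eq_one.mp h1).symm, mul_inv_eq_one.mp h2⟩
  have hmixed : ∀ s₁ ∈ S, ∀ s₂ ∈ S, ∀ t₁ ∈ T, ∀ u₂ ∈ U,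
      s₁⁻¹ * t₁ * t₀⁻¹ = s₂⁻¹ * u₂ * u₀⁻¹ → u₂ = u₀ := by
    intro s₁ hs₁ s₂ hs₂ t₁ ht₁ u₂ hu₂ heq
    have key := h (s₂ * s₁⁻¹) (mem_rq hs₂ hs₁) (t₁ * t₀⁻¹) (mem_rq ht₁ ht₀)
      (u₀ * u₂⁻¹) (mem_rq hu₀ hu₂)
    have hprod : s₂ * s₁⁻¹ * (t₁ * t₀⁻¹) * (u₀ * u₂⁻¹) = 1 := by
      calc s₂ * s₁⁻¹ * (t₁ * t₀⁻¹) * (u₀ * u₂⁻¹)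
          = s₂ * (s₁⁻¹ * t₁ * t₀⁻¹) * (u₀ * u₂⁻¹) := by group
      _ = s₂ * (s₂⁻¹ * u₂ * u₀⁻¹) * (u₀ * u₂⁻¹) := by rw [heq]
      _ = 1 := by group
    obtain ⟨-, -, h3⟩ := key.mp hprod
    exact (mul_inv_eq_one.mp h3).symm
  have hinj : Function.Injective f := by
    rintro ⟨s₁, x₁⟩ ⟨s₂, x₂⟩ heq
    match x₁, x₂ with
    | Sum.inl t₁, Sum.inl t₂ =>
      simp only [f] at heq
      have heq' : (s₁ : G)⁻¹ * t₁ = (s₂ : G)⁻¹ * t₂ := mul_right_cancel heq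
      obtain ⟨h1, h2⟩ := hST s₁ s₁.2 s₂ s₂.2 t₁ t₁.2 t₂ t₂.2 heq'
      simp [Prod.ext_iff, Subtype.ext_iff, h1, h2]
    | Sum.inr u₁, Sum.inr u₂ =>
      simp only [f] at heq
      have heq' : (s₁ : G)⁻¹ * u₁ = (s₂ : G)⁻¹ * u₂ := mul_right_cancel heq
      obtain ⟨h1, h2⟩ := hSU s₁ s₁.2 s₂ s₂.2 u₁ u₁.2.1 u₂ u₂.2.1 heq'
      simp [Prod.ext_iff, Subtype.ext_iff, h1, h2]
    | Sum.inl t₁, Sum.inr u₂ =>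
      exfalso
      simp only [f] at heq
      exact u₂.2.2 (hmixed s₁ s₁.2 s₂ s₂.2 t₁ t₁.2 u₂ u₂.2.1 heq)
    | Sum.inr u₁, Sum.inl t₂ =>
      exfalso
      simp only [f] at heq
      exact u₁.2.2 (hmixed s₂ s₂.2 s₁ s₁.2 t₂ t₂.2 u₁ u₁.2.1 heq.symm)
  have hcard := Nat.card_le_card_of_injective f hinj
  rw [Nat.card_prod, Nat.card_sum, Nat.card_coe_set_eq, Nat.card_coe_set_eq,
    Nat.card_coe_set_eq] at hcard
  have hVcard : V.ncard = U.ncard - 1 := Set.ncard_diff_singleton_of_mem hu₀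
  have hU1 : 1 ≤ U.ncard := (Set.ncard_pos (Set.toFinite U)).mpr ⟨u₀, hu₀⟩
  rw [hVcard] at hcard
  have heq : T.ncard + (U.ncard - 1) = T.ncard + U.ncard - 1 := by omega
  rwa [heq] at hcard

theorem stmt_2 {G : Type*} [Group G] [Fintype G] (S T U : Set G)
    (hS : S.Nonempty) (hT : T.Nonempty) (hU : U.Nonempty) (h : TPP S T U) :
    S.ncard * (T.ncard + U.ncard - 1) ≤ Nat.card G ∧
    T.ncard * (S.ncard + U.ncard - 1) ≤ Nat.card G ∧
    U.ncard * (S.ncard + T.ncard - 1) ≤ Nat.card G := by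
  refine ⟨key_lemma S T U hT hU h, ?_, ?_⟩
  · have := key_lemma T U S hU hS h.cyclic
    rwa [Nat.add_comm U.ncard S.ncard] at this
  · exact key_lemma U S T hS hT h.cyclic.cyclic
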